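/- arXiv:1104.2027 — 3 statements merged into one kernel-verified Lean document; each statement's English description precedes it below -/
import Mathlib

section
/- If B ∈ K[X] is a Belyi polynomial with 1 ≤ deg B < p and B(0) = 0, then every nonzero root of B has valuation v equal to 1, and every root of B−1 has valuation v equal to 1; that is, for all μ ∈ K with μ ≠ 0, if B(μ) = 0 then v(μ) = 1, and for all μ ∈ K, if B(μ) = 1 then v(μ) = 1. -/
/-!
Let `τ` be a root of `B (B - 1)` other than `0` of largest valuation; substituting `τ X` for `X`
we may assume that all roots of `B (B - 1)` are integral and that `τ` is a unit. The monic
polynomials `P = ∏ (X - r)` over the roots of `B` and `Q = ∏ (X - s)` over those of `B - 1` then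
reduce to the residue field `k`, where `P - Q` stays constant, `= e`, and `k` has characteristic
`p > deg B`, so a root of multiplicity `m` of a polynomial of degree `≤ deg B` is a root of
multiplicity exactly `m - 1` of its derivative.

As `B'` divides `B (B - 1)`, this count says over `K` that `B` and `B - 1` have together exactly
`deg B + 1` distinct roots. Over `k`, if `e ≠ 0` the reductions of `P` and `Q` have no common
root and the same count gives them at least `deg B + 1` distinct roots; if `e = 0` they coincide,
every root of their common derivative is one of their roots, and the count leaves them a single
distinct root, although `0` and the residue of `τ` are two. So reduction merges no roots of `B`
and separates them from those of `B - 1`; since `0` is a root of `B`, no other root of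
`B (B - 1)` reduces to `0`, i.e. all of them are units. Finally `1` is such a root, so
`v τ = v 1 = 1` before normalizing.
-/

open Polynomial

def IsBelyi {F : Type*} [Field F] (B : F[X]) : Prop :=
  B.eval 0 ∈ ({0, 1} : Set F) ∧ B.eval 1 ∈ ({0, 1} : Set F) ∧
    B.derivative ∣ B * (B - 1)

namespace Multiset

variable {α β : Type*} [DecidableEq α]

theorem count_sub_dedup (M : Multiset α) (a : α) : (M - M.dedup).count a = M.count a - 1 := by
  rw [count_sub, count_dedup]
  split_ifs with h
  · rfl
  · simp [count_eq_zero_of_notMem h]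

theorem card_sub_dedup (M : Multiset α) : card (M - M.dedup) = card M - M.toFinset.card := by
  rw [card_sub (dedup_le M), card_toFinset]

theorem injOn_of_card_toFinset_add_le [DecidableEq β] (f : α → β) {M N : Multiset α}
    (h : M.toFinset.card + N.toFinset.card ≤ (M.map f).toFinset.card + (N.map f).toFinset.card) :
    Set.InjOn f M.toFinset := by
  rw [toFinset_map, toFinset_map] at h
  have hM := M.toFinset.card_image_le (f := f)
  have hN := N.toFinset.card_image_le (f := f)
  exact Finset.card_image_iff.mp (by omega)

end Multiset

namespace Polynomial

section Domain

variable {k : Type*} [CommRing k] [IsDomain k] {P Q : k[X]} {e : k}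

theorem notMem_roots_of_sub_eq_C (hPQ : P - Q = C e) (he : e ≠ 0) {c : k} (hc : c ∈ P.roots) :
    c ∉ Q.roots := by
  intro hcQ
  have := congrArg (eval c) hPQ
  rw [eval_sub, (mem_roots'.mp hc).2, (mem_roots'.mp hcQ).2, eval_C, sub_zero] at this
  exact he this.symm

theorem mem_roots_or_mem_roots_sub_one {B : k[X]} (hdvd : derivative B ∣ B * (B - 1)) {c : k}
    (hc : c ∈ (derivative B).roots) : c ∈ B.roots ∨ c ∈ (B - 1).roots := by
  obtain ⟨hB', hroot⟩ := mem_roots'.mp hc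
  have hB : B ≠ 0 := by rintro rfl; exact hB' derivative_zero
  have hB1 : B - 1 ≠ 0 := by
    intro h; rw [sub_eq_zero.mp h, derivative_one] at hB'; exact hB' rfl
  have := hroot.dvd hdvd
  rw [IsRoot, eval_mul, mul_eq_zero] at this
  simpa [mem_roots hB, mem_roots hB1] using this

variable [DecidableEq k]

theorem count_roots_derivative (hP : ∀ m : ℕ, 0 < m → m ≤ P.natDegree → (m : k) ≠ 0)
    {c : k} (hc : c ∈ P.roots) :
    (derivative P).roots.count c = P.roots.count c - 1 := by
  simp only [count_roots]
  refine derivative_rootMultiplicity_of_root_of_mem_nonZeroDivisors (mem_roots'.mp hc).2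
    (mem_nonZeroDivisors_of_ne_zero (hP _ ?_ ?_))
  · rw [← count_roots]; exact Multiset.count_pos.mpr hc
  · rw [← count_roots]; exact (P.roots.count_le_card c).trans (card_roots' P)

theorem roots_derivative_le_sub_dedup
    (hP : ∀ m : ℕ, 0 < m → m ≤ P.natDegree → (m : k) ≠ 0)
    (hroots : ∀ c ∈ (derivative P).roots, c ∈ P.roots) :
    (derivative P).roots ≤ P.roots - P.roots.dedup := by
  rw [Multiset.le_iff_count]
  intro c
  by_cases hc : c ∈ P.roots
  · rw [count_roots_derivative hP hc, Multiset.count_sub_dedup]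
  · rw [Multiset.count_eq_zero_of_notMem (fun h => hc (hroots c h))]
    exact Nat.zero_le _

theorem card_toFinset_roots_le_one
    (hP : ∀ m : ℕ, 0 < m → m ≤ P.natDegree → (m : k) ≠ 0)
    (hroots : ∀ c ∈ (derivative P).roots, c ∈ P.roots)
    (hcard : Multiset.card (derivative P).roots + 1 = Multiset.card P.roots) :
    P.roots.toFinset.card ≤ 1 := by
  have := Multiset.card_le_card (roots_derivative_le_sub_dedup hP hroots)
  rw [Multiset.card_sub_dedup] at this
  have := Multiset.toFinset_card_le P.roots
  omega

theorem count_roots_derivative_of_sub_eq_C (hPQ : P - Q = C e) (he : e ≠ 0)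
    (hP : ∀ m : ℕ, 0 < m → m ≤ P.natDegree → (m : k) ≠ 0) {c : k}
    (hc : c ∈ P.roots ∨ c ∈ Q.roots) :
    (derivative P).roots.count c
      = (P.roots - P.roots.dedup).count c + (Q.roots - Q.roots.dedup).count c := by
  have hQ : Q = P - C e := by rw [← hPQ]; ring
  have hQP : Q - P = C (-e) := by rw [hQ, C_neg]; ring
  rw [Multiset.count_sub_dedup, Multiset.count_sub_dedup]
  rcases hc with hc | hc
  · rw [count_roots_derivative hP hc,
      Multiset.count_eq_zero_of_notMem (notMem_roots_of_sub_eq_C hPQ he hc), Nat.zero_sub,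
      add_zero]
  · have hQ' : ∀ m : ℕ, 0 < m → m ≤ Q.natDegree → (m : k) ≠ 0 := by
      rwa [hQ, natDegree_sub_C]
    rw [show derivative P = derivative Q by rw [hQ, derivative_sub, derivative_C, sub_zero],
      count_roots_derivative hQ' hc,
      Multiset.count_eq_zero_of_notMem (notMem_roots_of_sub_eq_C hQP (neg_ne_zero.mpr he) hc),
      Nat.zero_sub, zero_add]

theorem sub_dedup_add_sub_dedup_le_roots_derivative (hPQ : P - Q = C e) (he : e ≠ 0)
    (hP : ∀ m : ℕ, 0 < m → m ≤ P.natDegree → (m : k) ≠ 0) :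
    (P.roots - P.roots.dedup) + (Q.roots - Q.roots.dedup) ≤ (derivative P).roots := by
  rw [Multiset.le_iff_count]
  intro c
  by_cases hc : c ∈ P.roots ∨ c ∈ Q.roots
  · rw [Multiset.count_add, count_roots_derivative_of_sub_eq_C hPQ he hP hc]
  · push Not at hc
    simp [Multiset.count_eq_zero_of_notMem hc.1,
      Multiset.count_eq_zero_of_notMem hc.2]

theorem roots_derivative_eq_sub_dedup_add_sub_dedup (hPQ : P - Q = C e) (he : e ≠ 0)
    (hP : ∀ m : ℕ, 0 < m → m ≤ P.natDegree → (m : k) ≠ 0)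
    (hroots : ∀ c ∈ (derivative P).roots, c ∈ P.roots ∨ c ∈ Q.roots) :
    (derivative P).roots = (P.roots - P.roots.dedup) + (Q.roots - Q.roots.dedup) := by
  ext c
  by_cases hc : c ∈ P.roots ∨ c ∈ Q.roots
  · rw [Multiset.count_add, count_roots_derivative_of_sub_eq_C hPQ he hP hc]
  · push Not at hc
    simp [Multiset.count_eq_zero_of_notMem hc.1,
      Multiset.count_eq_zero_of_notMem hc.2,
      Multiset.count_eq_zero_of_notMem (fun h => (hroots c h).elim hc.1 hc.2)]

theorem disjoint_and_card_le_of_prod_sub_C {U W N : Multiset k} {e : k}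
    (hmult : ∀ m : ℕ, 0 < m → m ≤ Multiset.card U → (m : k) ≠ 0)
    (hPQ : (U.map (X - C ·)).prod - C e = (W.map (X - C ·)).prod)
    (hder : derivative (U.map (X - C ·)).prod = C (Multiset.card U : k) * (N.map (X - C ·)).prod)
    (hN : ∀ x ∈ N, x ∈ U ∨ x ∈ W) (hcardN : Multiset.card N + 1 = Multiset.card U)
    {a b : k} (ha : a ∈ U) (hb : b ∈ U ∨ b ∈ W) (hab : a ≠ b) :
    (∀ x ∈ U, x ∉ W) ∧ Multiset.card U + 1 ≤ U.toFinset.card + W.toFinset.card := by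
  set P := (U.map (X - C ·)).prod
  have hPr : P.roots = U := roots_multiset_prod_X_sub_C U
  have hQr : (W.map (X - C ·)).prod.roots = W := roots_multiset_prod_X_sub_C W
  have hPdeg : P.natDegree = Multiset.card U := natDegree_multiset_prod_X_sub_C_eq_card U
  have hP'r : (derivative P).roots = N := by
    rw [hder, roots_C_mul _ (hmult _ (Multiset.card_pos_iff_exists_mem.mpr ⟨a, ha⟩) le_rfl),
      roots_multiset_prod_X_sub_C]
  rw [← hPdeg] at hmult
  have he : e ≠ 0 := by
    rintro rfl
    have hUW : U = W := by rw [← hPr, ← hQr, ← hPQ, C_0, sub_zero]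
    have hle := card_toFinset_roots_le_one hmult
      (by rw [hP'r, hPr]; exact fun x hx => (hN x hx).elim id (hUW ▸ ·))
      (by rw [hP'r, hPr, hcardN])
    rw [hPr] at hle
    have hb' : b ∈ U := hb.elim id (hUW ▸ ·)
    exact hab (Finset.card_le_one.mp hle a (Multiset.mem_toFinset.mpr ha) b
      (Multiset.mem_toFinset.mpr hb'))
  have hPQ' : P - (W.map (X - C ·)).prod = C e := by rw [← hPQ, sub_sub_cancel]
  refine ⟨fun x hx hxW => notMem_roots_of_sub_eq_C hPQ' he (by rwa [hPr]) (by rwa [hQr]), ?_⟩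
  have hW : Multiset.card W = Multiset.card U := by
    rw [← natDegree_multiset_prod_X_sub_C_eq_card W, ← hPQ, natDegree_sub_C, hPdeg]
  have hle := Multiset.card_le_card (sub_dedup_add_sub_dedup_le_roots_derivative hPQ' he hmult)
  rw [Multiset.card_add, Multiset.card_sub_dedup, Multiset.card_sub_dedup, hPr, hQr, hP'r] at hle
  have := U.toFinset_card_le
  have := W.toFinset_card_le
  omega

end Domain

theorem sub_one_ne_zero_of_natDegree_pos {R : Type*} [Ring R] {B : R[X]} (hB : 0 < B.natDegree) :
    B - 1 ≠ 0 := fun h => by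
  rw [sub_eq_zero.mp h, natDegree_one] at hB
  exact hB.false

theorem derivative_comp_dvd {R : Type*} [CommRing R] {B : R[X]}
    (hdvd : derivative B ∣ B * (B - 1)) {q : R[X]} (hq : IsUnit (derivative q)) :
    derivative (B.comp q) ∣ B.comp q * (B.comp q - 1) := by
  rw [derivative_comp, hq.mul_left_dvd]
  obtain ⟨r, hr⟩ := hdvd
  exact ⟨r.comp q, by rw [← mul_comp, ← hr, mul_comp, sub_comp, one_comp]⟩

theorem map_multiset_prod_X_sub_C {A B : Type*} [CommRing A] [CommRing B] (f : A →+* B)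
    (M : Multiset A) : ((M.map (X - C ·)).prod).map f = ((M.map f).map (X - C ·)).prod := by
  simp [Polynomial.map_multiset_prod, Multiset.map_map]

end Polynomial

namespace Valuation

open IsLocalRing

variable {K Γ₀ : Type*} [Field K] [LinearOrderedCommGroupWithZero Γ₀] (v : Valuation K Γ₀)

/-- Reduction modulo the maximal ideal of the valuation ring, extended by `0` outside it. -/
noncomputable def reduce (x : K) : ResidueField v.valuationSubring :=
  if h : v x ≤ 1 then residue _ ⟨x, h⟩ else 0

theorem reduce_coe (a : v.valuationSubring) : v.reduce a = residue _ a := by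
  rw [reduce, dif_pos (show v a ≤ 1 from a.2)]

theorem reduce_eq_zero_iff {x : K} (hx : v x ≤ 1) : v.reduce x = 0 ↔ v x < 1 := by
  rw [reduce, dif_pos hx, residue_eq_zero_iff, mem_maximalIdeal_iff]

theorem reduce_zero : v.reduce 0 = 0 :=
  (v.reduce_eq_zero_iff (by simp)).mpr (by simp)

theorem natCast_ne_zero_of_lt_prime {p : ℕ} (hp : p.Prime) (hvp : v p < 1) {m : ℕ} (hm : 0 < m)
    (hmp : m < p) : (m : ResidueField v.valuationSubring) ≠ 0 := by
  have : CharP (ResidueField v.valuationSubring) p := by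
    rw [CharP.charP_iff_prime_eq_zero hp, ← map_natCast (residue v.valuationSubring),
      residue_eq_zero_iff, mem_maximalIdeal_iff]
    simpa using hvp
  rw [Ne, CharP.cast_eq_zero_iff _ p]
  exact fun h => absurd (Nat.le_of_dvd hm h) (by omega)

theorem exists_lift_prod_X_sub_C {M : Multiset K} (hM : ∀ x ∈ M, v x ≤ 1) :
    ∃ F : v.valuationSubring[X], F.map v.valuationSubring.subtype = (M.map (X - C ·)).prod ∧
      F.map (residue _) = ((M.map v.reduce).map (X - C ·)).prod := by
  lift M to Multiset v.valuationSubring using hM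
  refine ⟨(M.map (X - C ·)).prod, map_multiset_prod_X_sub_C _ M, ?_⟩
  simp only [map_multiset_prod_X_sub_C, Multiset.map_map, Function.comp_def, reduce_coe]

theorem exists_prod_reduce_sub_C_eq {R S : Multiset K} (hR : ∀ x ∈ R, v x ≤ 1)
    (hS : ∀ x ∈ S, v x ≤ 1) {ε : K}
    (h : (R.map (X - C ·)).prod - C ε = (S.map (X - C ·)).prod) :
    ∃ e, ((R.map v.reduce).map (X - C ·)).prod - C e
      = ((S.map v.reduce).map (X - C ·)).prod := by
  obtain ⟨F, hFK, hFk⟩ := v.exists_lift_prod_X_sub_C hR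
  obtain ⟨G, hGK, hGk⟩ := v.exists_lift_prod_X_sub_C hS
  have hconst : (F - G).natDegree = 0 := by
    rw [← natDegree_map_eq_of_injective v.valuationSubring.subtype_injective, Polynomial.map_sub,
      hFK, hGK, ← h, sub_sub_cancel, natDegree_C]
  have hFG : F - C ((F - G).coeff 0) = G := by
    rw [← eq_C_of_natDegree_eq_zero hconst, sub_sub_cancel]
  refine ⟨residue _ ((F - G).coeff 0), ?_⟩
  rw [← hFk, ← hGk, ← Polynomial.map_C, ← Polynomial.map_sub, hFG]

theorem derivative_prod_reduce {R H : Multiset K} (hR : ∀ x ∈ R, v x ≤ 1)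
    (hH : ∀ x ∈ H, v x ≤ 1) {n : ℕ}
    (h : derivative (R.map (X - C ·)).prod = C (n : K) * (H.map (X - C ·)).prod) :
    derivative ((R.map v.reduce).map (X - C ·)).prod
      = C (n : ResidueField v.valuationSubring) * ((H.map v.reduce).map (X - C ·)).prod := by
  obtain ⟨F, hFK, hFk⟩ := v.exists_lift_prod_X_sub_C hR
  obtain ⟨G, hGK, hGk⟩ := v.exists_lift_prod_X_sub_C hH
  have hFG : derivative F = C (n : v.valuationSubring) * G := by
    apply map_injective _ v.valuationSubring.subtype_injective
    rw [← derivative_map, hFK, h, Polynomial.map_mul, hGK, Polynomial.map_C,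
      map_natCast v.valuationSubring.subtype]
  rw [← hFk, ← hGk, derivative_map, hFG, Polynomial.map_mul, Polynomial.map_C,
    map_natCast (residue _)]

end Valuation

section Belyi

variable {K : Type*} [Field K]

theorem card_toFinset_roots_add_le [CharZero K] [DecidableEq K] {B : K[X]}
    (hdvd : derivative B ∣ B * (B - 1)) (hB' : (derivative B).Splits) :
    B.roots.toFinset.card + (B - 1).roots.toFinset.card ≤ B.natDegree + 1 := by
  have h := congrArg Multiset.card (roots_derivative_eq_sub_dedup_add_sub_dedup
    (by rw [sub_sub_cancel, C_1]) one_ne_zero (fun m hm _ => Nat.cast_ne_zero.mpr hm.ne')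
    (fun c hc => mem_roots_or_mem_roots_sub_one hdvd hc))
  rw [splits_iff_card_roots.mp hB', natDegree_derivative, Multiset.card_add,
    Multiset.card_sub_dedup, Multiset.card_sub_dedup] at h
  have hdeg : (B - 1).natDegree = B.natDegree := by rw [← C_1, natDegree_sub_C]
  have := card_roots' B
  have := card_roots' (B - 1)
  have := B.roots.toFinset_card_le
  have := (B - 1).roots.toFinset_card_le
  omega

variable [IsAlgClosed K]

theorem prod_roots_sub_C_eq_prod_roots_sub_one {B : K[X]} (hB : 0 < B.natDegree) :
    (B.roots.map (X - C ·)).prod - C B.leadingCoeff⁻¹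
      = ((B - 1).roots.map (X - C ·)).prod := by
  have hc : B.leadingCoeff ≠ 0 := leadingCoeff_ne_zero.mpr (ne_zero_of_natDegree_gt hB)
  have hlc : (B - 1).leadingCoeff = B.leadingCoeff :=
    leadingCoeff_sub_of_degree_lt (by rwa [degree_one, ← natDegree_pos_iff_degree_pos])
  apply mul_left_cancel₀ (C_ne_zero.mpr hc)
  rw [mul_sub, ← (IsAlgClosed.splits B).eq_prod_roots, ← C_mul, mul_inv_cancel₀ hc, C_1,
    ← hlc, ← (IsAlgClosed.splits (B - 1)).eq_prod_roots]

theorem derivative_prod_roots [CharZero K] {B : K[X]} (hB : B ≠ 0) :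
    derivative (B.roots.map (X - C ·)).prod
      = C (B.natDegree : K) * ((derivative B).roots.map (X - C ·)).prod := by
  set P := (B.roots.map (X - C ·)).prod
  have hPdeg : P.natDegree = B.natDegree := by
    rw [natDegree_multiset_prod_X_sub_C_eq_card, splits_iff_card_roots.mp (IsAlgClosed.splits B)]
  have hroots : (derivative B).roots = (derivative P).roots := by
    rw [(IsAlgClosed.splits B).eq_prod_roots, derivative_C_mul,
      roots_C_mul _ (leadingCoeff_ne_zero.mpr hB)]
  rw [hroots, ← hPdeg]
  conv_lhs => rw [(IsAlgClosed.splits (derivative P)).eq_prod_roots, leadingCoeff_derivative,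
    (monic_multisetProd_X_sub_C B.roots).leadingCoeff, one_mul]

variable [CharZero K] {Γ₀ : Type*} [LinearOrderedCommGroupWithZero Γ₀] (v : Valuation K Γ₀)
  {p : ℕ} {B : K[X]}

theorem reduce_separates_roots (hp : p.Prime) (hvp : v p < 1)
    (hdvd : derivative B ∣ B * (B - 1)) (hB : 0 < B.natDegree) (hBp : B.natDegree < p)
    (h0 : B.eval 0 = 0) (hle : ∀ μ, B.eval μ ∈ ({0, 1} : Set K) → v μ ≤ 1) {τ : K}
    (hτ : B.eval τ ∈ ({0, 1} : Set K)) (hvτ : v τ = 1) :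
    (∀ x y, B.eval x = 0 → B.eval y = 1 → v.reduce x ≠ v.reduce y) ∧
      Set.InjOn v.reduce {x | B.eval x = 0} := by
  classical
  have hB1 := sub_one_ne_zero_of_natDegree_pos hB
  have hmemR : ∀ x, x ∈ B.roots ↔ B.eval x = 0 := fun _ =>
    mem_roots (ne_zero_of_natDegree_gt hB)
  have hmemS : ∀ x, x ∈ (B - 1).roots ↔ B.eval x = 1 := by simp [mem_roots hB1, sub_eq_zero]
  have hR : ∀ x ∈ B.roots, v x ≤ 1 := fun x hx => hle x (Or.inl ((hmemR x).mp hx))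
  have hS : ∀ x ∈ (B - 1).roots, v x ≤ 1 := fun x hx => hle x (Or.inr ((hmemS x).mp hx))
  have hH : ∀ x ∈ (derivative B).roots, v x ≤ 1 := fun x hx =>
    (mem_roots_or_mem_roots_sub_one hdvd hx).elim (hR x) (hS x)
  have hRcard : Multiset.card B.roots = B.natDegree :=
    splits_iff_card_roots.mp (IsAlgClosed.splits B)
  obtain ⟨e, hk1⟩ :=
    v.exists_prod_reduce_sub_C_eq hR hS (prod_roots_sub_C_eq_prod_roots_sub_one hB)
  have hk2 := v.derivative_prod_reduce hR hH (derivative_prod_roots (ne_zero_of_natDegree_gt hB))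
  rw [← hRcard, ← Multiset.card_map v.reduce] at hk2
  obtain ⟨hdisj, hcard⟩ := disjoint_and_card_le_of_prod_sub_C
    (fun m hm hmn => v.natCast_ne_zero_of_lt_prime hp hvp hm (by simp at hmn; omega)) hk1 hk2
    (fun x hx => by
      obtain ⟨y, hy, rfl⟩ := Multiset.mem_map.mp hx
      exact (mem_roots_or_mem_roots_sub_one hdvd hy).imp (Multiset.mem_map_of_mem _)
        (Multiset.mem_map_of_mem _))
    (by simp [splits_iff_card_roots.mp (IsAlgClosed.splits (derivative B)), hRcard]; omega)
    (Multiset.mem_map_of_mem _ ((hmemR 0).mpr h0))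
    (hτ.imp (fun h => Multiset.mem_map_of_mem _ ((hmemR τ).mpr h))
      (fun h => Multiset.mem_map_of_mem _ ((hmemS τ).mpr h)))
    (by rw [v.reduce_zero, ne_comm, Ne, v.reduce_eq_zero_iff hvτ.le, hvτ]; exact lt_irrefl 1)
  refine ⟨fun x y hx hy hxy => hdisj _ (Multiset.mem_map_of_mem _ ((hmemR x).mpr hx))
    (hxy ▸ Multiset.mem_map_of_mem _ ((hmemS y).mpr hy)), ?_⟩
  have hinj := Multiset.injOn_of_card_toFinset_add_le v.reduce (M := B.roots)
    (N := (B - 1).roots)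
    (by have := card_toFinset_roots_add_le hdvd (IsAlgClosed.splits _); simp at hcard; omega)
  convert hinj using 1
  ext x
  simp [hmemR]

theorem valuation_eq_one_of_forall_le_one (hp : p.Prime) (hvp : v p < 1)
    (hdvd : derivative B ∣ B * (B - 1)) (hB : 0 < B.natDegree) (hBp : B.natDegree < p)
    (h0 : B.eval 0 = 0) (hle : ∀ μ, B.eval μ ∈ ({0, 1} : Set K) → v μ ≤ 1)
    {τ : K} (hτ : B.eval τ ∈ ({0, 1} : Set K)) (hvτ : v τ = 1) {μ : K} (hμ0 : μ ≠ 0)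
    (hμ : B.eval μ ∈ ({0, 1} : Set K)) : v μ = 1 := by
  obtain ⟨hsep, hinj⟩ := reduce_separates_roots v hp hvp hdvd hB hBp h0 hle hτ hvτ
  by_contra hne
  have hred : v.reduce μ = v.reduce 0 := by
    rw [v.reduce_zero, v.reduce_eq_zero_iff (hle μ hμ)]
    exact lt_of_le_of_ne (hle μ hμ) hne
  rcases hμ with hμ | hμ
  · exact hμ0 (hinj hμ h0 hred)
  · exact hsep 0 μ h0 hμ hred.symm

theorem valuation_eq_of_forall_valuation_le (hp : p.Prime) (hvp : v p < 1)
    (hdvd : derivative B ∣ B * (B - 1)) (hB : 0 < B.natDegree) (hBp : B.natDegree < p)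
    (h0 : B.eval 0 = 0) {τ : K} (hτ0 : τ ≠ 0) (hτ : B.eval τ ∈ ({0, 1} : Set K))
    (hmax : ∀ μ, μ ≠ 0 → B.eval μ ∈ ({0, 1} : Set K) → v μ ≤ v τ)
    {μ : K} (hμ0 : μ ≠ 0)
    (hμ : B.eval μ ∈ ({0, 1} : Set K)) : v μ = v τ := by
  have heval : ∀ x, (B.comp (C τ * X)).eval x = B.eval (τ * x) := by simp
  have hvτ : 0 < v τ := v.pos_iff.mpr hτ0
  have hdeg : (B.comp (C τ * X)).natDegree = B.natDegree := by
    rw [natDegree_comp, natDegree_C_mul_X τ hτ0, mul_one]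
  have hle : ∀ x, (B.comp (C τ * X)).eval x ∈ ({0, 1} : Set K) → v x ≤ 1 := by
    intro x hx
    rcases eq_or_ne x 0 with rfl | hx0
    · simp
    · rw [heval] at hx
      have := hmax _ (mul_ne_zero hτ0 hx0) hx
      rw [map_mul] at this
      exact le_of_mul_le_mul_left (by rwa [mul_one]) hvτ
  have key := valuation_eq_one_of_forall_le_one v hp hvp
    (derivative_comp_dvd hdvd (by simp [hτ0])) (hdeg ▸ hB) (hdeg ▸ hBp)
    (by rw [heval, mul_zero, h0]) hle (τ := 1) (by rwa [heval, mul_one]) (map_one v)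
    (div_ne_zero hμ0 hτ0) (by rwa [heval, mul_div_cancel₀ _ hτ0])
  rwa [map_div₀, div_eq_one_iff_eq hvτ.ne'] at key

end Belyi

theorem roots_of_small_belyi_have_valuation_one_general {K : Type*} [Field K] [IsAlgClosed K]
    [CharZero K] (p : ℕ) (hp : p.Prime) (v : Valuation K NNReal)
    (hvp1 : v (p : K) < 1)
    (B : K[X]) (hB : IsBelyi B) (hBdeg : 1 ≤ B.natDegree) (hBdeg' : B.natDegree < p)
    (h0 : B.eval 0 = 0) :
    (∀ μ : K, μ ≠ 0 → B.eval μ = 0 → v μ = 1) ∧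
    (∀ μ : K, B.eval μ = 1 → v μ = 1) := by
  classical
  obtain ⟨-, h1, hdvd⟩ := hB
  have hBB : B * (B - 1) ≠ 0 :=
    mul_ne_zero (ne_zero_of_natDegree_gt hBdeg) (sub_one_ne_zero_of_natDegree_pos hBdeg)
  set T := (B * (B - 1)).roots.toFinset.erase 0
  have hT : ∀ μ, μ ∈ T ↔ μ ≠ 0 ∧ B.eval μ ∈ ({0, 1} : Set K) := by
    intro μ
    simp [T, mem_roots hBB, sub_eq_zero]
  obtain ⟨τ, hτT, hτmax⟩ := T.exists_max_image v ⟨1, (hT 1).mpr ⟨one_ne_zero, h1⟩⟩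
  rw [hT] at hτT
  have hval : ∀ μ, μ ≠ 0 → B.eval μ ∈ ({0, 1} : Set K) → v μ = v τ := fun μ =>
    valuation_eq_of_forall_valuation_le v hp hvp1 hdvd hBdeg hBdeg' h0 hτT.1 hτT.2
      (fun x hx0 hx => hτmax x ((hT x).mpr ⟨hx0, hx⟩))
  have hτ1 : v τ = 1 := by rw [← hval 1 one_ne_zero h1, map_one]
  refine ⟨fun μ hμ0 hμ => (hval μ hμ0 (Or.inl hμ)).trans hτ1, fun μ hμ => ?_⟩
  have hμ0 : μ ≠ 0 := by
    rintro rfl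
    rw [h0] at hμ
    exact zero_ne_one hμ
  exact (hval μ hμ0 (Or.inr hμ)).trans hτ1

/-- If `B` is a Belyi polynomial with `1 ≤ deg B < p` and `B 0 = 0`, then every nonzero
root of `B` and every root of `B - 1` has valuation `1`. -/
theorem roots_of_small_belyi_have_valuation_one {K : Type*} [Field K] [IsAlgClosed K]
    [CharZero K] (p : ℕ) (hp : p.Prime) (v : Valuation K NNReal)
    (hvp0 : 0 < v (p : K)) (hvp1 : v (p : K) < 1)
    (B : K[X]) (hB : IsBelyi B) (hBdeg : 1 ≤ B.natDegree) (hBdeg' : B.natDegree < p)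
    (h0 : B.eval 0 = 0) :
    (∀ μ : K, μ ≠ 0 → B.eval μ = 0 → v μ = 1) ∧
    (∀ μ : K, B.eval μ = 1 → v μ = 1) :=
  roots_of_small_belyi_have_valuation_one_general p hp v hvp1 B hB hBdeg hBdeg' h0
end

section
/- Let F be an algebraically closed field of characteristic p > 0 and let f ∈ F[X] be a nonzero polynomial. If the derivative f' divides f² and f(0) = 0, then either f is a monomial (f = a·X^d for some a ∈ F and d ∈ ℕ) or deg f ≥ p. -/
/-!
Suppose `n = deg f < p`. Every root `a` of `f` has multiplicity `m_a ≤ n < p`, so it is a root of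
`f'` of multiplicity exactly `m_a - 1`, and `f' ∣ f²` says that `f'` has no other roots. Since `n`
is invertible in `F`, `deg f' = n - 1`; counting the roots of `f'` with multiplicity gives
`n - 1 = ∑ (m_a - 1) = n - #{roots of f}`. Hence `f` has a single root, which is `0`, and `f` is
a multiple of `X ^ n`.
-/

open Polynomial

theorem CharP.cast_ne_zero_of_lt {R : Type*} [AddMonoidWithOne R] (p : ℕ) [CharP R p] {m : ℕ}
    (hm₀ : m ≠ 0) (hmp : m < p) : (m : R) ≠ 0 := by
  rw [Ne, CharP.cast_eq_zero_iff R p]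
  exact Nat.not_dvd_of_pos_of_lt (Nat.pos_of_ne_zero hm₀) hmp

namespace Polynomial

theorem natDegree_derivative_of_natDegree_cast_ne_zero {R : Type*} [Semiring R] [NoZeroDivisors R]
    {f : R[X]} (h : (f.natDegree : R) ≠ 0) : f.derivative.natDegree = f.natDegree - 1 := by
  obtain ⟨m, hm⟩ : ∃ m, f.natDegree = m + 1 :=
    Nat.exists_eq_succ_of_ne_zero fun h' ↦ h (by rw [h', Nat.cast_zero])
  have hf : f ≠ 0 := by rintro rfl; simp at hm
  refine le_antisymm (natDegree_derivative_le f) (le_natDegree_of_ne_zero ?_)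
  rw [hm] at h ⊢
  rw [Nat.add_sub_cancel, coeff_derivative]
  exact mul_ne_zero (by rw [← hm]; exact leadingCoeff_ne_zero.2 hf) (by exact_mod_cast h)

section Field

variable {F : Type*} [Field F]

theorem rootMultiplicity_le_natDegree (f : F[X]) (a : F) : f.rootMultiplicity a ≤ f.natDegree := by
  classical
  rw [← count_roots]
  exact (Multiset.count_le_card _ _).trans (card_roots' f)

theorem sum_rootMultiplicity_roots_toFinset [DecidableEq F] (f : F[X]) :
    ∑ a ∈ f.roots.toFinset, f.rootMultiplicity a = f.roots.card := by
  simp_rw [← count_roots]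
  exact Multiset.toFinset_sum_count_eq _

theorem rootMultiplicity_derivative_of_natDegree_lt (p : ℕ) [CharP F p] {f : F[X]} {a : F}
    (hf : f.natDegree < p) (ha : f.IsRoot a) :
    f.derivative.rootMultiplicity a = f.rootMultiplicity a - 1 := by
  rcases eq_or_ne f 0 with rfl | hf₀
  · simp
  refine derivative_rootMultiplicity_of_root_of_mem_nonZeroDivisors ha
    (mem_nonZeroDivisors_of_ne_zero (CharP.cast_ne_zero_of_lt p ?_ ?_))
  · exact ((rootMultiplicity_pos hf₀).2 ha).ne'
  · exact (rootMultiplicity_le_natDegree f a).trans_lt hf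

variable [IsAlgClosed F]

theorem natDegree_derivative_add_card_roots_toFinset [DecidableEq F] (p : ℕ) [CharP F p]
    {f : F[X]} (hf : f.natDegree < p) (hroots : ∀ a, f.derivative.IsRoot a → f.IsRoot a) :
    f.derivative.natDegree + f.roots.toFinset.card = f.natDegree := by
  have hsubset : f.derivative.roots.toFinset ⊆ f.roots.toFinset := by
    intro a ha
    simp only [Multiset.mem_toFinset, mem_roots'] at ha ⊢
    exact ⟨fun h ↦ ha.1 (by rw [h, derivative_zero]), hroots a ha.2⟩
  have hmult : ∀ a ∈ f.roots.toFinset,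
      f.derivative.rootMultiplicity a + 1 = f.rootMultiplicity a := by
    intro a ha
    obtain ⟨hf₀, ha⟩ := mem_roots'.1 (Multiset.mem_toFinset.1 ha)
    rw [rootMultiplicity_derivative_of_natDegree_lt p hf ha,
      Nat.sub_add_cancel ((rootMultiplicity_pos hf₀).2 ha)]
  have hderiv : f.derivative.natDegree =
      ∑ a ∈ f.roots.toFinset, f.derivative.rootMultiplicity a := by
    rw [← IsAlgClosed.card_roots_eq_natDegree, ← sum_rootMultiplicity_roots_toFinset]
    refine Finset.sum_subset hsubset fun a _ ha ↦ ?_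
    rw [← count_roots]
    exact Multiset.count_eq_zero.2 (Multiset.mem_toFinset.not.1 ha)
  rw [hderiv, Finset.card_eq_sum_ones, ← Finset.sum_add_distrib, Finset.sum_congr rfl hmult,
    sum_rootMultiplicity_roots_toFinset, IsAlgClosed.card_roots_eq_natDegree]

theorem eq_C_leadingCoeff_mul_X_sub_C_pow {f : F[X]} {a : F} (h : ∀ b, f.IsRoot b → b = a) :
    f = C f.leadingCoeff * (X - C a) ^ f.natDegree := by
  have hroots : f.roots = Multiset.replicate f.natDegree a := by
    rw [← IsAlgClosed.card_roots_eq_natDegree, Multiset.eq_replicate_card]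
    exact fun b hb ↦ h b (isRoot_of_mem_roots hb)
  conv_lhs =>
    rw [← C_leadingCoeff_mul_prod_multiset_X_sub_C (IsAlgClosed.card_roots_eq_natDegree (p := f))]
  rw [hroots, Multiset.map_replicate, Multiset.prod_replicate]

end Field

end Polynomial

theorem monomial_or_large_degree_of_derivative_dvd_sq_general {F : Type*} [Field F] [IsAlgClosed F]
    (p : ℕ) [CharP F p]
    (f : F[X]) (hdvd : f.derivative ∣ f ^ 2) (h0 : f.eval 0 = 0) :
    (∃ (a : F) (d : ℕ), f = C a * X ^ d) ∨ p ≤ f.natDegree := by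
  classical
  refine (le_or_gt p f.natDegree).symm.imp (fun hlt ↦ ?_) id
  rcases eq_or_ne f.natDegree 0 with hdeg | hdeg
  · exact ⟨f.coeff 0, 0, by rw [pow_zero, mul_one]; exact eq_C_of_natDegree_eq_zero hdeg⟩
  have hf : f ≠ 0 := by rintro rfl; exact hdeg natDegree_zero
  have hroots : ∀ a, f.derivative.IsRoot a → f.IsRoot a := fun a ha ↦
    pow_eq_zero_iff two_ne_zero |>.1 (by simpa using ha.dvd hdvd)
  have hcard := natDegree_derivative_add_card_roots_toFinset p hlt hroots
  rw [natDegree_derivative_of_natDegree_cast_ne_zero (CharP.cast_ne_zero_of_lt p hdeg hlt)] at hcard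
  have hzero : ∀ b, f.IsRoot b → b = 0 := fun b hb ↦
    (Finset.card_le_one (s := f.roots.toFinset)).1 (by omega) b (by simpa [hf] using hb) 0 (by simpa [hf] using h0)
  exact ⟨f.leadingCoeff, f.natDegree, by simpa using eq_C_leadingCoeff_mul_X_sub_C_pow hzero⟩

/-- Over an algebraically closed field of characteristic `p > 0`, a nonzero polynomial `f`
with `f' ∣ f ^ 2` and `f 0 = 0` is either a monomial or has degree at least `p`. -/
theorem monomial_or_large_degree_of_derivative_dvd_sq {F : Type*} [Field F] [IsAlgClosed F]
    (p : ℕ) [CharP F p] (hp : 0 < p)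
    (f : F[X]) (hf : f ≠ 0) (hdvd : f.derivative ∣ f ^ 2) (h0 : f.eval 0 = 0) :
    (∃ (a : F) (d : ℕ), f = C a * X ^ d) ∨ p ≤ f.natDegree :=
  monomial_or_large_degree_of_derivative_dvd_sq_general p f hdvd h0
end

section
/- For every prime p, the polynomial C(X) = X·(p−X)^{p−1}/(p−1)^{p−1} ∈ ℚ[X] (which equals B_{1,p}(X/p)) is a Belyi polynomial of degree exactly p satisfying C(p) = 0, C(0) = 0 and C(1) = 1. Hence the lower bound ℋ(λ) ≥ p is sharp: the Belyi height of p equals p. -/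
open Polynomial

/-- The *Belyi height* of `λ`: the minimal degree of a nonconstant Belyi polynomial
mapping `λ` into `{0, 1}`. -/
noncomputable def belyiHeight (F : Type*) [Field F] (lam : F) : ℕ :=
  sInf {d : ℕ | ∃ B : F[X], IsBelyi B ∧ 0 < B.natDegree ∧ B.natDegree = d ∧
    B.eval lam ∈ ({0, 1} : Set F)}

/-!
The polynomial `X (n - X)^(n-1) / (n-1)^(n-1)` has critical points only at `1` and `n`, with
critical values `1` and `0`; this gives `ℋ(p) ≤ p`.

For `ℋ(p) ≥ p`, let `B` be a Belyi polynomial of degree `d` with `B(p) ∈ {0, 1}`, and let `A` be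
a valuation ring of `ℚ̄` in which `p` is not a unit. Rescaling `X` by a point of
`S = B⁻¹{0, 1}` of largest absolute value, we may assume `S ⊆ A` and still `0, 1 ∈ S`. Write
`B = c M`, `B - 1 = c N` with `M`, `N` monic and `T = ∏_{s ∈ S} (X - s)`; then `B' ∣ B (B - 1)`
becomes `d M N = M' T`, and `M - N` is constant. Reduce modulo the maximal ideal of `A`. If
`d < p`, either `M̄ - N̄` is a nonzero constant, so `M̄`, `N̄` are coprime and `T̄` is squarefree,
or `M̄ = N̄` and counting multiplicities in `d M̄² = M̄' T̄` leaves `T̄` with a single root, which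
is impossible since `0 ≢ 1`. So distinct points of `S` have distinct reductions, which fails for
`0` and the rescaled `p`.
-/

namespace Polynomial

section CommRing

variable {R : Type*} [CommRing R]

theorem Monic.coeff_derivative_natDegree_sub_one {M : R[X]} (hM : M.Monic) :
    (derivative M).coeff (M.natDegree - 1) = M.natDegree := by
  rcases Nat.eq_zero_or_pos M.natDegree with h | h
  · simp [h, coeff_derivative, coeff_eq_zero_of_natDegree_lt]
  · rw [coeff_derivative, Nat.sub_add_cancel h, hM.coeff_natDegree, one_mul]
    push_cast [Nat.cast_sub h]
    ring

theorem Monic.natDegree_derivative_of_cast_ne_zero {M : R[X]} (hM : M.Monic)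
    (hd : (M.natDegree : R) ≠ 0) : (derivative M).natDegree = M.natDegree - 1 :=
  le_antisymm (natDegree_derivative_le M)
    (le_natDegree_of_ne_zero (hM.coeff_derivative_natDegree_sub_one ▸ hd))

theorem Monic.derivative_ne_zero_of_cast_ne_zero {M : R[X]} (hM : M.Monic)
    (hd : (M.natDegree : R) ≠ 0) : derivative M ≠ 0 := fun h => hd <| by
  rw [← hM.coeff_derivative_natDegree_sub_one, h, coeff_zero]

end CommRing

section IsDomain

variable {R : Type*} [CommRing R] [IsDomain R]

theorem rootMultiplicity_multiset_prod_X_sub_C [DecidableEq R] (s : Multiset R) (x : R) :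
    rootMultiplicity x (s.map (X - C ·)).prod = s.count x := by
  rw [← count_roots, roots_multiset_prod_X_sub_C]

theorem mul_sub_one_ne_zero {B : R[X]} (hB : 0 < B.natDegree) : B * (B - 1) ≠ 0 :=
  mul_ne_zero (ne_zero_of_natDegree_gt hB) fun h => by simp [sub_eq_zero.mp h] at hB

theorem mem_roots_mul_sub_one_iff {B : R[X]} (hB : 0 < B.natDegree) {x : R} :
    x ∈ (B * (B - 1)).roots ↔ B.eval x ∈ ({0, 1} : Set R) := by
  simp [mem_roots (mul_sub_one_ne_zero hB), sub_eq_zero]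

theorem rootMultiplicity_le_one_of_isRoot_of_not_isRoot {M N T : R[X]} {δ r : R}
    (hE : C δ * (M * N) = derivative M * T) (hδ : δ ≠ 0) (hM' : derivative M ≠ 0)
    (hT : T ≠ 0) (hM : M.IsRoot r) (hN : ¬ N.IsRoot r) : rootMultiplicity r T ≤ 1 := by
  have hM0 : M ≠ 0 := fun h => hM' (by rw [h, derivative_zero])
  have hN0 : N ≠ 0 := fun h => hN (by simp [h])
  have hmult := congrArg (rootMultiplicity r) hE
  rw [rootMultiplicity_mul (mul_ne_zero (C_ne_zero.mpr hδ) (mul_ne_zero hM0 hN0)),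
    rootMultiplicity_mul (mul_ne_zero hM0 hN0), rootMultiplicity_mul (mul_ne_zero hM' hT),
    rootMultiplicity_C, rootMultiplicity_eq_zero hN] at hmult
  have := rootMultiplicity_sub_one_le_derivative_rootMultiplicity_of_ne_zero M r hM'
  have := (rootMultiplicity_pos hM0).mpr hM
  omega

theorem rootMultiplicity_le_one_of_isCoprime {M N T : R[X]} {δ : R} (hMN : IsCoprime M N)
    (hE : C δ * (M * N) = derivative M * T) (hder : derivative M = derivative N) (hδ : δ ≠ 0)
    (hM' : derivative M ≠ 0) (hT : T ≠ 0) (r : R) : rootMultiplicity r T ≤ 1 := by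
  by_cases hT0 : T.IsRoot r
  swap
  · exact (rootMultiplicity_eq_zero hT0).trans_le zero_le_one
  have hroots : ¬ (M.IsRoot r ∧ N.IsRoot r) := fun ⟨hM, hN⟩ =>
    not_isCoprime_zero_zero (by simpa [hM.eq_zero, hN.eq_zero] using hMN.map (evalRingHom r))
  have hMN0 : M.IsRoot r ∨ N.IsRoot r := by
    simpa [hT0.eq_zero, hδ] using congrArg (eval r) hE
  rcases hMN0 with hM | hN
  · exact rootMultiplicity_le_one_of_isRoot_of_not_isRoot hE hδ hM' hT hM
      fun hN => hroots ⟨hM, hN⟩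
  · refine rootMultiplicity_le_one_of_isRoot_of_not_isRoot (M := N) (N := M) ?_ hδ
      (hder ▸ hM') hT hN fun hM => hroots ⟨hM, hN⟩
    rw [mul_comm N, ← hder, hE]

theorem eq_add_dedup_of_C_mul_mul_self_eq_derivative_mul [DecidableEq R] {a c : Multiset R}
    (hchar : ∀ m : ℕ, 0 < m → m ≤ Multiset.card a → (m : R) ≠ 0) (ha : a ≠ 0)
    (hE : C (Multiset.card a : R) * ((a.map (X - C ·)).prod * (a.map (X - C ·)).prod)
      = derivative (a.map (X - C ·)).prod * (c.map (X - C ·)).prod) :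
    c = a + a.dedup := by
  set M := (a.map (X - C ·)).prod
  set T := (c.map (X - C ·)).prod
  have hMmonic : M.Monic := monic_multisetProd_X_sub_C a
  have hd : (Multiset.card a : R) ≠ 0 := hchar _ (Multiset.card_pos.mpr ha) le_rfl
  have hM0 : M ≠ 0 := hMmonic.ne_zero
  have hM' : derivative M ≠ 0 := hMmonic.derivative_ne_zero_of_cast_ne_zero
    (by rwa [natDegree_multiset_prod_X_sub_C_eq_card])
  have hT : T ≠ 0 := (monic_multisetProd_X_sub_C c).ne_zero
  refine Multiset.ext.mpr fun x => ?_
  rw [Multiset.count_add, Multiset.count_dedup, ← rootMultiplicity_multiset_prod_X_sub_C,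
    ← rootMultiplicity_multiset_prod_X_sub_C]
  change rootMultiplicity x T = rootMultiplicity x M + _
  split_ifs with hx
  · have hxM : M.IsRoot x := isRoot_of_mem_roots (by rwa [roots_multiset_prod_X_sub_C])
    have hmult_pos := (rootMultiplicity_pos hM0).mpr hxM
    have hmult_le : rootMultiplicity x M ≤ Multiset.card a := by
      rw [rootMultiplicity_multiset_prod_X_sub_C]
      exact Multiset.count_le_card x a
    have hmult := congrArg (rootMultiplicity x) hE
    rw [rootMultiplicity_mul (mul_ne_zero (C_ne_zero.mpr hd) (mul_ne_zero hM0 hM0)),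
      rootMultiplicity_mul (mul_ne_zero hM0 hM0), rootMultiplicity_mul (mul_ne_zero hM' hT),
      rootMultiplicity_C, derivative_rootMultiplicity_of_root_of_mem_nonZeroDivisors hxM
        (mem_nonZeroDivisors_of_ne_zero (hchar _ hmult_pos hmult_le))] at hmult
    omega
  · have hxM : ¬ M.IsRoot x := fun h => hx <| by
      rw [← roots_multiset_prod_X_sub_C a]
      exact (mem_roots hM0).mpr h
    have hxT : ¬ T.IsRoot x := fun h => hxM <| by
      simpa [h.eq_zero, hd] using congrArg (eval x) hE
    rw [rootMultiplicity_eq_zero hxT, rootMultiplicity_eq_zero hxM]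

theorem forall_eq_of_C_mul_mul_self_eq_derivative_mul {a c : Multiset R}
    (hchar : ∀ m : ℕ, 0 < m → m ≤ Multiset.card a → (m : R) ≠ 0) (ha : a ≠ 0)
    (hE : C (Multiset.card a : R) * ((a.map (X - C ·)).prod * (a.map (X - C ·)).prod)
      = derivative (a.map (X - C ·)).prod * (c.map (X - C ·)).prod) :
    ∀ x ∈ c, ∀ y ∈ c, x = y := by
  classical
  have hMmonic := monic_multisetProd_X_sub_C a
  have hMdeg := natDegree_multiset_prod_X_sub_C_eq_card a
  have hd : (Multiset.card a : R) ≠ 0 := hchar _ (Multiset.card_pos.mpr ha) le_rfl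
  have hcard : Multiset.card c = Multiset.card a + 1 := by
    have := congrArg natDegree hE
    rw [natDegree_C_mul hd, hMmonic.natDegree_mul hMmonic,
      natDegree_mul (hMmonic.derivative_ne_zero_of_cast_ne_zero (hMdeg ▸ hd))
        (monic_multisetProd_X_sub_C c).ne_zero,
      hMmonic.natDegree_derivative_of_cast_ne_zero (hMdeg ▸ hd), hMdeg,
      natDegree_multiset_prod_X_sub_C_eq_card] at this
    have := Multiset.card_pos.mpr ha
    omega
  have hc := eq_add_dedup_of_C_mul_mul_self_eq_derivative_mul hchar ha hE
  obtain ⟨x₀, hx₀⟩ : ∃ x₀, a.dedup = {x₀} := Multiset.card_eq_one.mp <| by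
    rw [hc, Multiset.card_add] at hcard
    omega
  have hc₀ : ∀ x ∈ c, x = x₀ := fun x hx => by
    rwa [hc, Multiset.mem_add, ← Multiset.mem_dedup, hx₀, or_self, Multiset.mem_singleton] at hx
  intro x hx y hy
  rw [hc₀ x hx, hc₀ y hy]

theorem roots_eq_dedup_of_mul_sub_one_eq_derivative_mul [CharZero R] [DecidableEq R]
    {B W : R[X]}
    (hBB : B * (B - 1) ≠ 0) (hW : B * (B - 1) = derivative B * W) :
    W.roots = (B * (B - 1)).roots.dedup := by
  have hB : B ≠ 0 := left_ne_zero_of_mul hBB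
  have hB1 : B - 1 ≠ 0 := right_ne_zero_of_mul hBB
  have hder : derivative (B - 1) = derivative B := by rw [derivative_sub, derivative_one, sub_zero]
  refine Multiset.ext.mpr fun x => ?_
  have hmult := congrArg (rootMultiplicity x) hW
  rw [rootMultiplicity_mul hBB, rootMultiplicity_mul (hW ▸ hBB)] at hmult
  simp only [count_roots, Multiset.count_dedup, mem_roots hBB, root_mul]
  by_cases hx : B.IsRoot x
  · have hx1 : ¬ (B - 1).IsRoot x := by simp [hx.eq_zero]
    rw [rootMultiplicity_eq_zero hx1, derivative_rootMultiplicity_of_root hx] at hmult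
    have := (rootMultiplicity_pos hB).mpr hx
    rw [if_pos (.inl hx)]
    omega
  by_cases hx1 : (B - 1).IsRoot x
  · rw [rootMultiplicity_eq_zero hx, ← hder, derivative_rootMultiplicity_of_root hx1] at hmult
    have := (rootMultiplicity_pos hB1).mpr hx1
    rw [if_pos (.inr hx1)]
    omega
  · rw [rootMultiplicity_eq_zero hx, rootMultiplicity_eq_zero hx1] at hmult
    rw [if_neg (by tauto)]
    omega

end IsDomain

section Field

variable {k : Type*} [Field k]

theorem nodup_or_forall_eq_of_C_mul_eq_derivative_mul {a b c : Multiset k}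
    (hchar : ∀ m : ℕ, 0 < m → m ≤ Multiset.card a → (m : k) ≠ 0) (ha : a ≠ 0)
    (hconst : ((a.map (X - C ·)).prod - (b.map (X - C ·)).prod).natDegree = 0)
    (hE : C (Multiset.card a : k) * ((a.map (X - C ·)).prod * (b.map (X - C ·)).prod)
      = derivative (a.map (X - C ·)).prod * (c.map (X - C ·)).prod) :
    c.Nodup ∨ ∀ x ∈ c, ∀ y ∈ c, x = y := by
  classical
  set M := (a.map (X - C ·)).prod
  set N := (b.map (X - C ·)).prod
  obtain ⟨e, he⟩ : ∃ e, M - N = C e := ⟨_, eq_C_of_natDegree_eq_zero hconst⟩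
  rcases eq_or_ne e 0 with rfl | he0
  · rw [C_0, sub_eq_zero] at he
    rw [← he] at hE
    exact .inr (forall_eq_of_C_mul_mul_self_eq_derivative_mul hchar ha hE)
  have hMN : IsCoprime M N := ⟨C e⁻¹, -C e⁻¹, by
    rw [neg_mul, ← sub_eq_add_neg, ← mul_sub, he, ← C_mul, inv_mul_cancel₀ he0, C_1]⟩
  have hder : derivative M = derivative N := by
    rw [← sub_eq_zero, ← derivative_sub, he, derivative_C]
  have hd : (Multiset.card a : k) ≠ 0 := hchar _ (Multiset.card_pos.mpr ha) le_rfl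
  have hM' : derivative M ≠ 0 := (monic_multisetProd_X_sub_C a).derivative_ne_zero_of_cast_ne_zero
    (by rwa [natDegree_multiset_prod_X_sub_C_eq_card])
  refine .inl (Multiset.nodup_iff_count_le_one.mpr fun x => ?_)
  rw [← rootMultiplicity_multiset_prod_X_sub_C]
  exact rootMultiplicity_le_one_of_isCoprime hMN hE hder hd hM'
    (monic_multisetProd_X_sub_C c).ne_zero x

end Field

section IsAlgClosed

variable {K : Type*} [Field K] [IsAlgClosed K]

theorem C_leadingCoeff_mul_prod_roots_sub_one {B : K[X]} (hB : 0 < B.natDegree) :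
    C B.leadingCoeff * ((B - 1).roots.map (X - C ·)).prod = B - 1 := by
  have hlc : (B - 1).leadingCoeff = B.leadingCoeff :=
    leadingCoeff_sub_of_degree_lt (by rwa [degree_one, ← natDegree_pos_iff_degree_pos])
  rw [← hlc, C_leadingCoeff_mul_prod_multiset_X_sub_C IsAlgClosed.card_roots_eq_natDegree]

theorem natDegree_prod_roots_sub_prod_roots_sub_one {B : K[X]} (hB : 0 < B.natDegree) :
    ((B.roots.map (X - C ·)).prod - ((B - 1).roots.map (X - C ·)).prod).natDegree = 0 := by
  have hc : B.leadingCoeff ≠ 0 := leadingCoeff_ne_zero.mpr (ne_zero_of_natDegree_gt hB)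
  have h := C_leadingCoeff_mul_prod_multiset_X_sub_C (IsAlgClosed.card_roots_eq_natDegree (p := B))
  have h1 := C_leadingCoeff_mul_prod_roots_sub_one hB
  rw [← natDegree_C_mul hc, mul_sub, h, h1, sub_sub_cancel, natDegree_one]

theorem C_natDegree_mul_prod_roots_eq_derivative_mul [CharZero K] [DecidableEq K] {B : K[X]}
    (hB : 0 < B.natDegree) (hdvd : derivative B ∣ B * (B - 1)) :
    C (B.natDegree : K) * ((B.roots.map (X - C ·)).prod * ((B - 1).roots.map (X - C ·)).prod)
      = derivative (B.roots.map (X - C ·)).prod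
        * ((B * (B - 1)).roots.dedup.map (X - C ·)).prod := by
  obtain ⟨W, hW⟩ := hdvd
  have hB0 : B ≠ 0 := ne_zero_of_natDegree_gt hB
  have hc : B.leadingCoeff ≠ 0 := leadingCoeff_ne_zero.mpr hB0
  have hBB := mul_sub_one_ne_zero hB
  have hWT : C W.leadingCoeff * ((B * (B - 1)).roots.dedup.map (X - C ·)).prod = W := by
    rw [← roots_eq_dedup_of_mul_sub_one_eq_derivative_mul hBB hW]
    exact C_leadingCoeff_mul_prod_multiset_X_sub_C IsAlgClosed.card_roots_eq_natDegree
  have hBM : C B.leadingCoeff * (B.roots.map (X - C ·)).prod = B :=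
    C_leadingCoeff_mul_prod_multiset_X_sub_C IsAlgClosed.card_roots_eq_natDegree
  have hBN := C_leadingCoeff_mul_prod_roots_sub_one hB
  set M := (B.roots.map (X - C ·)).prod
  set N := ((B - 1).roots.map (X - C ·)).prod
  set T := ((B * (B - 1)).roots.dedup.map (X - C ·)).prod
  set c := B.leadingCoeff
  have hMNT : C c * (M * N) = C W.leadingCoeff * (derivative M * T) := by
    apply mul_left_cancel₀ (C_ne_zero.mpr hc)
    rw [← hWT, ← hBN, ← hBM, derivative_C_mul] at hW
    linear_combination hW
  have hMdeg : M.natDegree = B.natDegree := by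
    rw [← hBM, natDegree_C_mul hc]
  have hlc : c = W.leadingCoeff * B.natDegree := by
    simpa [M, N, T, leadingCoeff_mul, monic_multisetProd_X_sub_C, hMdeg] using
      congrArg leadingCoeff hMNT
  have hw : W.leadingCoeff ≠ 0 := fun h => hc (by rw [hlc, h, zero_mul])
  apply mul_left_cancel₀ (C_ne_zero.mpr hw)
  rw [← mul_assoc, ← C_mul, ← hlc, hMNT]

end IsAlgClosed

section Transfer

variable {R S T : Type*} [CommRing R] [CommRing S] [CommRing T]

theorem map_multiset_prod_X_sub_C_s12 (f : R →+* S) (s : Multiset R) :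
    ((s.map (X - C ·)).prod).map f = ((s.map f).map (X - C ·)).prod := by
  simp [Polynomial.map_multiset_prod, Multiset.map_map]

variable {f : R →+* S} {a b c : Multiset R}

theorem natDegree_map_prod_sub_prod_eq_zero (hf : Function.Injective f) (g : R →+* T)
    (h : (((a.map f).map (X - C ·)).prod - ((b.map f).map (X - C ·)).prod).natDegree = 0) :
    (((a.map g).map (X - C ·)).prod - ((b.map g).map (X - C ·)).prod).natDegree = 0 := by
  rw [← map_multiset_prod_X_sub_C_s12, ← map_multiset_prod_X_sub_C_s12, ← Polynomial.map_sub,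
    natDegree_map_eq_of_injective hf] at h
  rw [← map_multiset_prod_X_sub_C_s12, ← map_multiset_prod_X_sub_C_s12, ← Polynomial.map_sub]
  exact Nat.eq_zero_of_le_zero (h ▸ natDegree_map_le)

theorem C_mul_map_prod_eq_derivative_mul (hf : Function.Injective f) (g : R →+* T) (n : ℕ)
    (h : C (n : S) * (((a.map f).map (X - C ·)).prod * ((b.map f).map (X - C ·)).prod)
      = derivative ((a.map f).map (X - C ·)).prod * ((c.map f).map (X - C ·)).prod) :
    C (n : T) * (((a.map g).map (X - C ·)).prod * ((b.map g).map (X - C ·)).prod)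
      = derivative ((a.map g).map (X - C ·)).prod * ((c.map g).map (X - C ·)).prod := by
  have hR : C (n : R) * ((a.map (X - C ·)).prod * (b.map (X - C ·)).prod)
      = derivative (a.map (X - C ·)).prod * (c.map (X - C ·)).prod := by
    apply map_injective f hf
    simpa only [Polynomial.map_mul, map_C, map_natCast, Polynomial.map_natCast,
      map_multiset_prod_X_sub_C_s12, ← derivative_map] using h
  simpa only [Polynomial.map_mul, map_C, map_natCast, Polynomial.map_natCast,
    map_multiset_prod_X_sub_C_s12, ← derivative_map] using congrArg (map g) hR

end Transfer

end Polynomial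

section Belyi

variable {F : Type*} [Field F]

theorem IsBelyi.comp_C_mul_X {B : F[X]} (hB : IsBelyi B) {α : F} (hα : α ≠ 0)
    (hBα : B.eval α ∈ ({0, 1} : Set F)) : IsBelyi (B.comp (C α * X)) := by
  refine ⟨by simpa using hB.1, by simpa using hBα, ?_⟩
  rw [derivative_comp, derivative_C_mul_X, (isUnit_C.mpr hα.isUnit).mul_left_dvd]
  simpa [mul_comp, sub_comp] using _root_.map_dvd (compRingHom (C α * X)) hB.2.2

end Belyi

theorem exists_valuationSubring_valuation_natCast_lt_one (K : Type*) [Field K] [CharZero K]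
    {p : ℕ} (hp : p.Prime) : ∃ A : ValuationSubring K, A.valuation (p : K) < 1 := by
  have hp_unit : ¬ IsUnit (p : (⊥ : Subring K)) := fun h => by
    obtain ⟨v, hv⟩ := h.exists_right_inv
    obtain ⟨n, hn⟩ := Subring.mem_bot.mp v.2
    have : ((p * n : ℤ) : K) = ((1 : ℤ) : K) := by
      push_cast
      rw [hn]
      exact congrArg Subtype.val hv
    have := Int.eq_one_of_mul_eq_one_right (by positivity) (Int.cast_injective this)
    exact hp.one_lt.ne' (by exact_mod_cast this)
  obtain ⟨A, -, hA⟩ := Ideal.image_subset_nonunits_valuationSubring _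
    (mt Ideal.span_singleton_eq_top.mp hp_unit)
  exact ⟨A, A.mem_nonunits_iff.mp (hA ⟨_, Ideal.subset_span rfl, rfl⟩)⟩

section Valuation

open IsLocalRing

variable {K : Type*} [Field K] [CharZero K] [IsAlgClosed K] (A : ValuationSubring K)

theorem IsBelyi.nodup_map_residue [DecidableEq K] {B : K[X]} (hB : IsBelyi B)
    (hd : 0 < B.natDegree) {c : Multiset A}
    (hchar : ∀ m : ℕ, 0 < m → m ≤ B.natDegree → (m : ResidueField A) ≠ 0)
    (hc : c.map (algebraMap A K) = (B * (B - 1)).roots.dedup) :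
    (c.map (residue A)).Nodup := by
  have hBB := mul_sub_one_ne_zero hd
  have hmem (x : K) (hx : x ∈ (B * (B - 1)).roots) : ∃ x' ∈ c, algebraMap A K x' = x :=
    Multiset.mem_map.mp (hc ▸ Multiset.mem_dedup.mpr hx)
  have hlift (r : Multiset K) (hr : r ≤ (B * (B - 1)).roots) :
      ∃ r' : Multiset A, r'.map (algebraMap A K) = r :=
    CanLift.prf r fun x hx => by
      obtain ⟨x', -, rfl⟩ := hmem x (Multiset.mem_of_le hr hx)
      exact x'.2
  obtain ⟨a, ha⟩ := hlift B.roots (by rw [roots_mul hBB]; exact Multiset.le_add_right _ _)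
  obtain ⟨b, hb⟩ := hlift (B - 1).roots (by rw [roots_mul hBB]; exact Multiset.le_add_left _ _)
  have hι : Function.Injective (algebraMap A K) := Subtype.val_injective
  have hcard : Multiset.card (a.map (residue A)) = B.natDegree := by
    rw [Multiset.card_map, ← Multiset.card_map (algebraMap A K), ha,
      IsAlgClosed.card_roots_eq_natDegree]
  have hE := C_natDegree_mul_prod_roots_eq_derivative_mul hd hB.2.2
  rw [← ha, ← hb, ← hc] at hE
  have hconst := natDegree_prod_roots_sub_prod_roots_sub_one hd
  rw [← ha, ← hb] at hconst
  refine (nodup_or_forall_eq_of_C_mul_eq_derivative_mul (hcard ▸ hchar)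
    (Multiset.card_pos.mp (hcard ▸ hd)) (natDegree_map_prod_sub_prod_eq_zero hι _ hconst)
    (hcard ▸ C_mul_map_prod_eq_derivative_mul hι _ _ hE)).resolve_right fun hall => ?_
  obtain ⟨z, hzc, hz⟩ := hmem 0 ((mem_roots_mul_sub_one_iff hd).mpr hB.1)
  obtain ⟨o, hoc, ho⟩ := hmem 1 ((mem_roots_mul_sub_one_iff hd).mpr hB.2.1)
  rw [← map_zero (algebraMap A K)] at hz
  rw [← map_one (algebraMap A K)] at ho
  have := hall _ (Multiset.mem_map_of_mem _ hzc) _ (Multiset.mem_map_of_mem _ hoc)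
  rw [hι hz, hι ho, map_zero, map_one] at this
  exact zero_ne_one this

theorem IsBelyi.eq_of_valuation_sub_lt_one {B : K[X]} (hB : IsBelyi B) (hd : 0 < B.natDegree)
    (hchar : ∀ m : ℕ, 0 < m → m ≤ B.natDegree → (m : ResidueField A) ≠ 0)
    (hA : ∀ s ∈ (B * (B - 1)).roots, s ∈ A) {s t : K} (hs : s ∈ (B * (B - 1)).roots)
    (ht : t ∈ (B * (B - 1)).roots) (hst : A.valuation (s - t) < 1) : s = t := by
  classical
  obtain ⟨c, hc⟩ : ∃ c : Multiset A, c.map (algebraMap A K) = (B * (B - 1)).roots.dedup :=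
    CanLift.prf _ fun x hx => hA x (Multiset.mem_dedup.mp hx)
  obtain ⟨s', hs'c, rfl⟩ := Multiset.mem_map.mp (hc ▸ Multiset.mem_dedup.mpr hs)
  obtain ⟨t', ht'c, rfl⟩ := Multiset.mem_map.mp (hc ▸ Multiset.mem_dedup.mpr ht)
  refine congrArg _ (Multiset.inj_on_of_nodup_map (hB.nodup_map_residue A hd hchar hc)
    s' hs'c t' ht'c ?_)
  rw [← sub_eq_zero, ← map_sub, residue_eq_zero_iff, A.valuation_lt_one_iff]
  simpa using hst

theorem IsBelyi.exists_natCast_eq_zero {B : K[X]} (hB : IsBelyi B) (hd : 0 < B.natDegree)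
    {x : K} (hx0 : x ≠ 0) (hx : A.valuation x < 1) (hBx : B.eval x ∈ ({0, 1} : Set K)) :
    ∃ m : ℕ, 0 < m ∧ m ≤ B.natDegree ∧ (m : ResidueField A) = 0 := by
  by_contra! hchar
  have h1 : (1 : K) ∈ (B * (B - 1)).roots := (mem_roots_mul_sub_one_iff hd).mpr hB.2.1
  obtain ⟨α, hα, hmax⟩ :=
    Multiset.exists_max_image A.valuation (s := (B * (B - 1)).roots) fun h => by simp [h] at h1
  have hα1 : 1 ≤ A.valuation α := map_one A.valuation ▸ hmax 1 h1
  have hα0 : α ≠ 0 := by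
    rintro rfl
    simp at hα1
  set B' := B.comp (C α * X)
  have hB' : IsBelyi B' := hB.comp_C_mul_X hα0 ((mem_roots_mul_sub_one_iff hd).mp hα)
  have hd' : B'.natDegree = B.natDegree := by
    rw [natDegree_comp, natDegree_C_mul_X α hα0, mul_one]
  have hroots (y : K) : y ∈ (B' * (B' - 1)).roots ↔ B.eval (α * y) ∈ ({0, 1} : Set K) := by
    rw [mem_roots_mul_sub_one_iff (hd'.symm ▸ hd), eval_comp]
    simp
  have hA (s : K) (hs : s ∈ (B' * (B' - 1)).roots) : s ∈ A := by
    have := hmax _ ((mem_roots_mul_sub_one_iff hd).mpr ((hroots s).mp hs))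
    rw [map_mul] at this
    exact (A.valuation_le_one_iff s).mp
      ((mul_le_iff_le_one_right (zero_lt_one.trans_le hα1)).mp this)
  have hxα : A.valuation (α⁻¹ * x - 0) < 1 := by
    rw [sub_zero, map_mul, map_inv₀]
    have hα_inv : (A.valuation α)⁻¹ ≤ 1 :=
      (inv_le_one₀ (zero_lt_one.trans_le hα1)).mpr hα1
    exact (mul_le_of_le_one_left' hα_inv).trans_lt hx
  have := hB'.eq_of_valuation_sub_lt_one A (hd'.symm ▸ hd) (hd' ▸ hchar) hA
    ((hroots _).mpr (by rwa [mul_inv_cancel_left₀ hα0])) ((hroots 0).mpr (by simpa using hB.1))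
    hxα
  exact hx0 (by simpa [hα0] using this)

theorem IsBelyi.prime_le_natDegree {B : K[X]} (hB : IsBelyi B) (hd : 0 < B.natDegree) {p : ℕ}
    (hp : p.Prime) (hBp : B.eval (p : K) ∈ ({0, 1} : Set K)) : p ≤ B.natDegree := by
  obtain ⟨A, hA⟩ := exists_valuationSubring_valuation_natCast_lt_one K hp
  have : CharP (ResidueField A) p := (CharP.charP_iff_prime_eq_zero hp).mpr <| by
    rw [← map_natCast (residue A), residue_eq_zero_iff, A.valuation_lt_one_iff]
    simpa using hA
  obtain ⟨m, hm0, hmd, hm⟩ :=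
    hB.exists_natCast_eq_zero A hd (Nat.cast_ne_zero.mpr hp.ne_zero) hA hBp
  exact (Nat.le_of_dvd hm0 ((CharP.cast_eq_zero_iff _ p m).mp hm)).trans hmd

end Valuation

/-- `B_{1,n-1}(X/n)` for the standard Belyi polynomial
`B_{m,k} = (m+k)^(m+k) / (m^m k^k) · X^m (1 - X)^k`. -/
noncomputable def rescaledBelyi (F : Type*) [Field F] (n : ℕ) : F[X] :=
  C (1 / ((n : F) - 1) ^ (n - 1)) * (X * (C (n : F) - X) ^ (n - 1))

section RescaledBelyi

variable {F : Type*} [Field F] {n : ℕ}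

@[simp]
theorem eval_zero_rescaledBelyi : (rescaledBelyi F n).eval 0 = 0 := by
  simp [rescaledBelyi]

theorem eval_natCast_rescaledBelyi (hn : 2 ≤ n) : (rescaledBelyi F n).eval (n : F) = 0 := by
  simp [rescaledBelyi, zero_pow (by omega : n - 1 ≠ 0)]

theorem eval_one_rescaledBelyi [CharZero F] (hn : n ≠ 1) : (rescaledBelyi F n).eval 1 = 1 := by
  have : (n : F) - 1 ≠ 0 := sub_ne_zero.mpr (Nat.cast_ne_one.mpr hn)
  simp only [rescaledBelyi, eval_mul, eval_C, eval_X, eval_pow, eval_sub, one_mul]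
  field_simp

theorem natDegree_rescaledBelyi [CharZero F] (hn : 2 ≤ n) :
    (rescaledBelyi F n).natDegree = n := by
  have : (n : F) - 1 ≠ 0 := sub_ne_zero.mpr (Nat.cast_ne_one.mpr (by omega))
  have hY : (C (n : F) - X).natDegree = 1 := by
    rw [← neg_sub, natDegree_neg, natDegree_X_sub_C]
  rw [rescaledBelyi, natDegree_C_mul (one_div_ne_zero (pow_ne_zero _ this)),
    natDegree_mul X_ne_zero (pow_ne_zero _ (ne_zero_of_natDegree_gt (hY ▸ one_pos))),
    natDegree_X, natDegree_pow, hY]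
  omega

theorem derivative_rescaledBelyi (hn : 2 ≤ n) :
    derivative (rescaledBelyi F n)
      = C (1 / ((n : F) - 1) ^ (n - 1) * n) * ((C (n : F) - X) ^ (n - 2) * (1 - X)) := by
  obtain ⟨m, rfl⟩ : ∃ m, n = m + 2 := ⟨n - 2, by omega⟩
  simp only [rescaledBelyi, Nat.add_sub_cancel, show m + 2 - 1 = m + 1 by omega,
    derivative_mul, derivative_C, derivative_X, derivative_pow, derivative_sub,
    derivative_natCast, C_mul, map_natCast]
  push_cast
  ring

theorem isBelyi_rescaledBelyi [CharZero F] (hn : 2 ≤ n) : IsBelyi (rescaledBelyi F n) := by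
  have h1 := eval_one_rescaledBelyi (F := F) (by omega : n ≠ 1)
  refine ⟨by simp, by simp [h1], ?_⟩
  obtain ⟨U, hU⟩ := dvd_iff_isRoot.mpr (show (rescaledBelyi F n - 1).IsRoot 1 by simp [h1])
  have hn0 : (n : F[X]) * C (n : F)⁻¹ = 1 := by
    rw [← map_natCast C, ← C_mul, mul_inv_cancel₀ (Nat.cast_ne_zero.mpr (by omega)), C_1]
  -- `B' = (n c) (n - X)^(n-2) (1 - X)` while `B = c X (n - X)^(n-1)` and `X - 1 ∣ B - 1`
  refine ⟨-C (n : F)⁻¹ * X * (C (n : F) - X) * U, ?_⟩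
  rw [derivative_rescaledBelyi hn, hU]
  obtain ⟨m, rfl⟩ : ∃ m, n = m + 2 := ⟨n - 2, by omega⟩
  simp only [rescaledBelyi, Nat.add_sub_cancel, show m + 2 - 1 = m + 1 by omega, C_mul, C_1,
    map_natCast]
  linear_combination -(C (1 / ((↑(m + 2) : F) - 1) ^ (m + 1)) * X
    * ((↑(m + 2) : F[X]) - X) ^ (m + 1) * (X - 1) * U) * hn0

end RescaledBelyi

theorem belyiHeight_eq_natDegree {F : Type*} [Field F] {lam : F} {B₀ : F[X]}
    (hB₀ : IsBelyi B₀) (hpos : 0 < B₀.natDegree) (hlam : B₀.eval lam ∈ ({0, 1} : Set F))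
    (hmin : ∀ B : F[X], IsBelyi B → 0 < B.natDegree → B.eval lam ∈ ({0, 1} : Set F) →
      B₀.natDegree ≤ B.natDegree) :
    belyiHeight F lam = B₀.natDegree :=
  le_antisymm (Nat.sInf_le ⟨B₀, hB₀, hpos, rfl, hlam⟩)
    (le_csInf ⟨_, B₀, hB₀, hpos, rfl, hlam⟩ fun _ ⟨B, hB, hBpos, hBd, hBlam⟩ =>
      hBd ▸ hmin B hB hBpos hBlam)

/-- For a prime `p`, the polynomial `C X = X (p - X)^(p-1) / (p-1)^(p-1)` (which is
`B_{1,p}(X/p)`) is a Belyi polynomial of degree exactly `p` with `C p = 0`, `C 0 = 0` and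
`C 1 = 1`; consequently the Belyi height of `p` (as an algebraic number) is exactly `p`. -/
theorem belyi_height_of_prime_eq (p : ℕ) (hp : p.Prime) :
    IsBelyi (C (1 / ((p : ℚ) - 1) ^ (p - 1)) * (X * (C (p : ℚ) - X) ^ (p - 1))) ∧
    (C (1 / ((p : ℚ) - 1) ^ (p - 1)) * (X * (C (p : ℚ) - X) ^ (p - 1))).natDegree = p ∧
    (C (1 / ((p : ℚ) - 1) ^ (p - 1)) * (X * (C (p : ℚ) - X) ^ (p - 1))).eval (p : ℚ) = 0 ∧
    (C (1 / ((p : ℚ) - 1) ^ (p - 1)) * (X * (C (p : ℚ) - X) ^ (p - 1))).eval 0 = 0 ∧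
    (C (1 / ((p : ℚ) - 1) ^ (p - 1)) * (X * (C (p : ℚ) - X) ^ (p - 1))).eval 1 = 1 ∧
    belyiHeight (AlgebraicClosure ℚ) (p : AlgebraicClosure ℚ) = p := by
  have hp2 := hp.two_le
  refine ⟨isBelyi_rescaledBelyi hp2, natDegree_rescaledBelyi hp2, eval_natCast_rescaledBelyi hp2,
    eval_zero_rescaledBelyi, eval_one_rescaledBelyi hp.one_lt.ne', ?_⟩
  have hdeg : (rescaledBelyi (AlgebraicClosure ℚ) p).natDegree = p := natDegree_rescaledBelyi hp2
  refine (belyiHeight_eq_natDegree (isBelyi_rescaledBelyi hp2) (by rw [hdeg]; exact hp.pos) ?_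
    fun B hB hBpos hBp => ?_).trans hdeg
  · simp [eval_natCast_rescaledBelyi hp2]
  · rw [hdeg]
    exact hB.prime_le_natDegree hBpos hp hBp
end
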